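/- Let d₁,r₁,d₂,r₂ be positive integers and let Γ̃ : S(d₁,r₁) → M_{d₂}(M_{r₂}(ℂ)) be a linear map which is completely positive (for every n ≥ 1, whenever an n×n block matrix with all blocks in S(d₁,r₁) is positive semidefinite, its blockwise image under Γ̃ is positive semidefinite) and CPTP-preserving (whenever C ∈ S(d₁,r₁) is positive semidefinite with Tr_{r₁}(C) = I_{d₁}, then Γ̃(C) is positive semidefinite with Tr_{r₂}(Γ̃(C)) = I_{d₂}). Then there exists a completely positive linear map S̃ : M_{d₁}(M_{r₁}(ℂ)) → M_{d₂}(M_{r₂}(ℂ)) extending Γ̃ (i.e., S̃(C) = Γ̃(C) for all C ∈ S(d₁,r₁)) which is moreover TP-preserving: for every C ∈ M_{d₁}(M_{r₁}(ℂ)) (not necessarily positive semidefinite) with Tr_{r₁}(C) = I_{d₁}, one has Tr_{r₂}(S̃(C)) = I_{d₂}. In other words, every QSC extends to a quantum superchannel. -/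

import Mathlib

open scoped Kronecker ComplexOrder Matrix

noncomputable section

/-- Apply a map `φ` between matrix algebras blockwise to a block matrix. -/
def mapBlocks {m A B : Type*} (φ : Matrix A A ℂ → Matrix B B ℂ)
    (M : Matrix (m × A) (m × A) ℂ) : Matrix (m × B) (m × B) ℂ :=
  Matrix.of fun p q => φ (Matrix.of fun a b => M (p.1, a) (q.1, b)) p.2 q.2

/-- Complete positivity: every blockwise application preserves positive semidefiniteness. -/
def IsCP {A B : Type*} [Fintype A] [Fintype B] (φ : Matrix A A ℂ → Matrix B B ℂ) : Prop :=
  ∀ (n : ℕ) (M : Matrix (Fin n × A) (Fin n × A) ℂ), M.PosSemidef → (mapBlocks φ M).PosSemidef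

/-- CPTP: completely positive and trace preserving. -/
def IsCPTP {A B : Type*} [Fintype A] [Fintype B] (φ : Matrix A A ℂ →ₗ[ℂ] Matrix B B ℂ) : Prop :=
  IsCP ⇑φ ∧ ∀ X, (φ X).trace = X.trace

/-- The Choi matrix of a linear map, `C_φ = Σ_{ij} E_{ij} ⊗ φ(E_{ij})`. -/
def choi {d r : ℕ} (φ : Matrix (Fin d) (Fin d) ℂ →ₗ[ℂ] Matrix (Fin r) (Fin r) ℂ) :
    Matrix (Fin d × Fin r) (Fin d × Fin r) ℂ :=
  Matrix.of fun p q => φ (Matrix.single p.1 q.1 1) p.2 q.2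

/-- The trace of the `(i,j)` block of a block matrix. -/
def btr {d r : ℕ} (C : Matrix (Fin d × Fin r) (Fin d × Fin r) ℂ) (i j : Fin d) : ℂ :=
  ∑ k : Fin r, C (i, k) (j, k)

lemma btr_add {d r : ℕ} (C D : Matrix (Fin d × Fin r) (Fin d × Fin r) ℂ) (i j : Fin d) :
    btr (C + D) i j = btr C i j + btr D i j := by
  simp [btr, Finset.sum_add_distrib]

lemma btr_smul {d r : ℕ} (c : ℂ) (C : Matrix (Fin d × Fin r) (Fin d × Fin r) ℂ) (i j : Fin d) :
    btr (c • C) i j = c * btr C i j := by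
  simp [btr, Finset.mul_sum]

/-- The operator system `S(d,r)`: block matrices whose diagonal blocks all have
the same trace and whose off-diagonal blocks have trace zero. -/
def Sset (d r : ℕ) : Set (Matrix (Fin d × Fin r) (Fin d × Fin r) ℂ) :=
  {C | (∀ i j : Fin d, btr C i i = btr C j j) ∧ ∀ i j : Fin d, i ≠ j → btr C i j = 0}

/-- `S(d,r)` as a subspace. -/
def Ssub (d r : ℕ) : Submodule ℂ (Matrix (Fin d × Fin r) (Fin d × Fin r) ℂ) where
  carrier := Sset d r
  add_mem' := by
    rintro C D ⟨hC1, hC2⟩ ⟨hD1, hD2⟩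
    refine ⟨fun i j => ?_, fun i j hij => ?_⟩
    · rw [btr_add, btr_add, hC1 i j, hD1 i j]
    · rw [btr_add, hC2 i j hij, hD2 i j hij, add_zero]
  zero_mem' := by
    refine ⟨fun i j => ?_, fun i j _ => ?_⟩ <;> simp [btr]
  smul_mem' := by
    rintro c C ⟨hC1, hC2⟩
    refine ⟨fun i j => ?_, fun i j hij => ?_⟩
    · rw [btr_smul, btr_smul, hC1 i j]
    · rw [btr_smul, hC2 i j hij, mul_zero]

/-- The partial trace over the second factor. -/
def ptrace {d r : ℕ} (C : Matrix (Fin d × Fin r) (Fin d × Fin r) ℂ) : Matrix (Fin d) (Fin d) ℂ :=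
  Matrix.of fun i j => btr C i j


/-!
The map `Γ` is encoded by the functional `φ Z = ∑_{p,q} Γ(Z_{pq})_{pq}` on block matrices whose
blocks lie in `S(d₁,r₁)`; complete positivity of `Γ` says exactly that `φ` is nonnegative on
positive semidefinite block matrices. These block matrices form an operator system (closed under
`ᴴ` and containing `1`), so by Krein's extension theorem, i.e. M. Riesz extension of `re φ`
followed by complexification, `φ` extends to a positive functional `ψ` on all block matrices,
and `C ↦ (ψ (E_{pq} ⊗ C))_{pq}` is a completely positive extension of `Γ`.

Trace preservation needs no extension: `Tr_{r₁} C = 1` already forces `C ∈ S(d₁,r₁)`, and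
`C = 1/r₁ + D` with `Tr_{r₁} D = 0`. Splitting `D` into Hermitian parts `H`, each `1/r₁ + ε H` is
the Choi matrix of a channel for small `ε > 0`, so `Tr_{r₂} ∘ Γ` kills `H`.
-/

open Matrix ComplexStarModule

open scoped Matrix.Norms.L2Operator MatrixOrder in
theorem Matrix.IsHermitian.exists_posSemidef_smul_one_add {n : Type*} [Fintype n] [DecidableEq n]
    {H : Matrix n n ℂ} (hH : H.IsHermitian) : ∃ t : ℝ, 0 < t ∧ ((t : ℂ) • 1 + H).PosSemidef := by
  have hle := IsSelfAdjoint.neg_algebraMap_norm_le_self (A := Matrix n n ℂ) hH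
  rw [Matrix.le_iff, Algebra.algebraMap_eq_smul_one, sub_neg_eq_add, add_comm] at hle
  refine ⟨‖H‖ + 1, by positivity, ?_⟩
  have h : (((‖H‖ + 1 : ℝ)) : ℂ) • (1 : Matrix n n ℂ) + H = 1 + (‖H‖ • 1 + H) := by
    rw [Complex.ofReal_add, add_smul, Complex.coe_smul, Complex.ofReal_one, one_smul]
    abel
  rw [h]
  exact PosSemidef.one.add hle

theorem Matrix.posSemidef_iff_forall_dotProduct_mulVec_nonneg {n : Type*} [Fintype n]
    [DecidableEq n] {A : Matrix n n ℂ} : A.PosSemidef ↔ ∀ x, 0 ≤ star x ⬝ᵥ (A *ᵥ x) := by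
  refine ⟨fun h => h.dotProduct_mulVec_nonneg, fun h => ?_⟩
  rw [← Matrix.isPositive_toEuclideanLin_iff, LinearMap.isPositive_iff_complex]
  intro x
  obtain ⟨hre, him⟩ := Complex.nonneg_iff.mp (h x)
  have hreal := Complex.conj_eq_iff_im.mpr him.symm
  have e : x.ofLp ⬝ᵥ star (A *ᵥ x.ofLp) = starRingEnd ℂ (star x.ofLp ⬝ᵥ A *ᵥ x.ofLp) := by
    simp [dotProduct, mul_comm]
  simp only [EuclideanSpace.inner_eq_star_dotProduct, toLpLin_apply, e, hreal]
  exact ⟨Complex.conj_eq_iff_re.mp hreal, hre⟩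

theorem Submodule.exists_isSelfAdjoint_add_I_smul {A : Type*} [AddCommGroup A] [Module ℂ A]
    [StarAddMonoid A] [StarModule ℂ A] {V : Submodule ℂ A} (hV : ∀ a ∈ V, star a ∈ V) (a : V) :
    ∃ h k : V, IsSelfAdjoint (h : A) ∧ IsSelfAdjoint (k : A) ∧ a = h + Complex.I • k := by
  have hre : (ℜ (a : A) : A) ∈ V := by
    rw [realPart_apply_coe]
    exact V.smul_of_tower_mem _ (V.add_mem a.2 (hV _ a.2))
  have him : (ℑ (a : A) : A) ∈ V := by
    rw [imaginaryPart_apply_coe]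
    exact V.smul_mem _ (V.smul_of_tower_mem _ (V.sub_mem a.2 (hV _ a.2)))
  exact ⟨⟨_, hre⟩, ⟨_, him⟩, (ℜ (a : A)).2, (ℑ (a : A)).2,
    Subtype.ext (realPart_add_I_smul_imaginaryPart (a : A)).symm⟩

theorem Module.Dual.extendRCLike_complex_apply {F : Type*} [AddCommGroup F] [Module ℝ F]
    [Module ℂ F] [IsScalarTower ℝ ℂ F] (g : Module.Dual ℝ F) (x : F) :
    (extendRCLike g x : ℂ) = ⟨g x, -g (Complex.I • x)⟩ := by
  have hre := re_extendRCLike_apply (𝕜 := ℂ) g x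
  have him := im_extendRCLike_apply (𝕜 := ℂ) g x
  simp only [RCLike.re_to_complex, RCLike.im_to_complex, RCLike.I_to_complex] at hre him
  exact Complex.ext hre him

section Krein

variable {n : Type*}

/-- Riesz extension is run with this cone rather than the positive semidefinite one: every matrix
is pushed into it by a multiple of `1`, and it contains `± I • H` for Hermitian `H`, so the
extension vanishes on `I • H`. -/
def hermitianPartNonnegCone : PointedCone ℝ (Matrix n n ℂ) where
  carrier := {Z | (Z + Zᴴ).PosSemidef}
  zero_mem' := by simpa using PosSemidef.zero
  add_mem' {Z W} hZ hW := by
    rw [Set.mem_ofPred_eq, conjTranspose_add, add_add_add_comm]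
    exact hZ.add hW
  smul_mem' c Z hZ := by
    change ((c : ℝ) • Z + ((c : ℝ) • Z)ᴴ).PosSemidef
    rw [conjTranspose_smul, star_trivial, ← smul_add]
    exact hZ.smul c.2

theorem posSemidef_mem_hermitianPartNonnegCone {Z : Matrix n n ℂ} (hZ : Z.PosSemidef) :
    Z ∈ hermitianPartNonnegCone :=
  show (Z + Zᴴ).PosSemidef by rw [hZ.isHermitian.eq]; exact hZ.add hZ

theorem smul_mem_hermitianPartNonnegCone {H : Matrix n n ℂ} (hH : H.IsHermitian) {c : ℂ}
    (hc : c.re = 0) : c • H ∈ hermitianPartNonnegCone := by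
  change (c • H + (c • H)ᴴ).PosSemidef
  rw [conjTranspose_smul, hH.eq, ← add_smul, Complex.star_def, Complex.add_conj, hc, mul_zero,
    Complex.ofReal_zero, zero_smul]
  exact PosSemidef.zero

variable [Fintype n] [DecidableEq n] {V : Submodule ℂ (Matrix n n ℂ)} (φ : V →ₗ[ℂ] ℂ)

theorem im_eq_zero_of_isHermitian (h1 : (1 : Matrix n n ℂ) ∈ V)
    (hφ : ∀ Z : V, (Z : Matrix n n ℂ).PosSemidef → 0 ≤ φ Z) {H : V}
    (hH : (H : Matrix n n ℂ).IsHermitian) : (φ H).im = 0 := by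
  obtain ⟨t, -, ht⟩ := hH.exists_posSemidef_smul_one_add
  have ht' : (((t : ℂ) • ⟨1, h1⟩ + H : V) : Matrix n n ℂ).PosSemidef := ht
  have h₁ := (Complex.nonneg_iff.mp (hφ ⟨1, h1⟩ PosSemidef.one)).2
  have h₂ := (Complex.nonneg_iff.mp (hφ _ ht')).2
  rw [map_add, map_smul, smul_eq_mul, Complex.add_im, Complex.im_ofReal_mul, ← h₁, mul_zero,
    zero_add] at h₂
  exact h₂.symm

theorem re_map_conjTranspose (h1 : (1 : Matrix n n ℂ) ∈ V) (hV : ∀ Z ∈ V, Zᴴ ∈ V)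
    (hφ : ∀ Z : V, (Z : Matrix n n ℂ).PosSemidef → 0 ≤ φ Z) (Z : V) :
    (φ ⟨(Z : Matrix n n ℂ)ᴴ, hV _ Z.2⟩).re = (φ Z).re := by
  obtain ⟨h, k, hh, hk, rfl⟩ := V.exists_isSelfAdjoint_add_I_smul hV Z
  have hstar : (⟨((h + Complex.I • k : V) : Matrix n n ℂ)ᴴ, hV _ (h + Complex.I • k).2⟩ : V)
      = h - Complex.I • k := by
    ext1
    simp [show (h : Matrix n n ℂ)ᴴ = h from hh, show (k : Matrix n n ℂ)ᴴ = k from hk,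
      sub_eq_add_neg]
  rw [hstar, map_sub, map_add, map_smul]
  simp [im_eq_zero_of_isHermitian φ h1 hφ hk]

theorem exists_re_extension_nonneg (h1 : (1 : Matrix n n ℂ) ∈ V) (hV : ∀ Z ∈ V, Zᴴ ∈ V)
    (hφ : ∀ Z : V, (Z : Matrix n n ℂ).PosSemidef → 0 ≤ φ Z) :
    ∃ g : Matrix n n ℂ →ₗ[ℝ] ℝ,
      (∀ Z : V, g Z = (φ Z).re) ∧ ∀ Z ∈ hermitianPartNonnegCone, 0 ≤ g Z := by
  let f : Matrix n n ℂ →ₗ.[ℝ] ℝ :=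
    { domain := V.restrictScalars ℝ
      toFun := Complex.reLm ∘ₗ φ.restrictScalars ℝ }
  have f_nonneg : ∀ Z : f.domain, (Z : Matrix n n ℂ) ∈ hermitianPartNonnegCone → 0 ≤ f Z := by
    rintro ⟨Z, hZV⟩ hZ
    have hpsd : ((⟨Z, hZV⟩ + ⟨Zᴴ, hV _ hZV⟩ : V) : Matrix n n ℂ).PosSemidef := hZ
    have h2 := (Complex.nonneg_iff.mp (hφ _ hpsd)).1
    rw [map_add, Complex.add_re, re_map_conjTranspose φ h1 hV hφ ⟨Z, hZV⟩] at h2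
    change 0 ≤ (φ ⟨Z, hZV⟩).re
    linarith
  have f_dense : ∀ Y, ∃ Z : f.domain, (Z : Matrix n n ℂ) + Y ∈ hermitianPartNonnegCone := by
    intro Y
    obtain ⟨t, -, ht⟩ := (isHermitian_add_transpose_self Y).exists_posSemidef_smul_one_add
    refine ⟨⟨((t / 2 : ℝ) : ℂ) • 1, V.smul_mem _ h1⟩, ?_⟩
    change ((((t / 2 : ℝ) : ℂ) • 1 + Y) + (((t / 2 : ℝ) : ℂ) • 1 + Y)ᴴ).PosSemidef
    have e : (((t / 2 : ℝ) : ℂ) • 1 + Y) + (((t / 2 : ℝ) : ℂ) • 1 + Y)ᴴ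
        = (t : ℂ) • 1 + (Y + Yᴴ) := by
      rw [conjTranspose_add, conjTranspose_smul, conjTranspose_one, Complex.star_def,
        Complex.conj_ofReal]
      push_cast
      module
    rwa [e]
  obtain ⟨g, hgf, hg⟩ := riesz_extension hermitianPartNonnegCone f f_nonneg f_dense
  exact ⟨g, fun Z => hgf ⟨Z, Z.2⟩, hg⟩

theorem krein_extension (h1 : (1 : Matrix n n ℂ) ∈ V) (hV : ∀ Z ∈ V, Zᴴ ∈ V)
    (hφ : ∀ Z : V, (Z : Matrix n n ℂ).PosSemidef → 0 ≤ φ Z) :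
    ∃ ψ : Matrix n n ℂ →ₗ[ℂ] ℂ, (∀ Z : V, ψ Z = φ Z) ∧ ∀ Z, Z.PosSemidef → 0 ≤ ψ Z := by
  obtain ⟨g, hgφ, hg⟩ := exists_re_extension_nonneg φ h1 hV hφ
  refine ⟨Module.Dual.extendRCLike g, fun Z => ?_, fun Z hZ => ?_⟩
  · have hIZ := hgφ (Complex.I • Z)
    rw [Submodule.coe_smul, φ.map_smul, smul_eq_mul, Complex.I_mul_re] at hIZ
    rw [Module.Dual.extendRCLike_complex_apply, hgφ, hIZ, neg_neg]
  · have hI := hg _ (smul_mem_hermitianPartNonnegCone hZ.isHermitian (c := Complex.I) (by simp))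
    have hnegI := hg _ (smul_mem_hermitianPartNonnegCone hZ.isHermitian (c := -Complex.I) (by simp))
    rw [neg_smul, map_neg] at hnegI
    rw [Module.Dual.extendRCLike_complex_apply, Complex.nonneg_iff]
    exact ⟨hg Z (posSemidef_mem_hermitianPartNonnegCone hZ), by linarith⟩

end Krein

section Blocks

variable {ι A B : Type*}

def blockOf (Z : Matrix (ι × A) (ι × A) ℂ) (k l : ι) : Matrix A A ℂ :=
  Matrix.of fun a b => Z (k, a) (l, b)

theorem blockOf_kronecker (X : Matrix ι ι ℂ) (C : Matrix A A ℂ) (k l : ι) :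
    blockOf (X ⊗ₖ C) k l = X k l • C := by
  ext a b; simp [blockOf]

theorem blockOf_conjTranspose (Z : Matrix (ι × A) (ι × A) ℂ) (k l : ι) :
    blockOf Zᴴ k l = (blockOf Z l k)ᴴ := by
  ext a b; simp [blockOf]

variable (V : Submodule ℂ (Matrix A A ℂ))

def blockSubmodule (ι : Type*) : Submodule ℂ (Matrix (ι × A) (ι × A) ℂ) where
  carrier := {Z | ∀ k l, blockOf Z k l ∈ V}
  add_mem' hZ hW k l := V.add_mem (hZ k l) (hW k l)
  zero_mem' _ _ := V.zero_mem
  smul_mem' c _ hZ k l := V.smul_mem c (hZ k l)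

variable {V}

theorem kronecker_mem_blockSubmodule (X : Matrix ι ι ℂ) {C : Matrix A A ℂ} (hC : C ∈ V) :
    X ⊗ₖ C ∈ blockSubmodule V ι := fun k l => by
  rw [blockOf_kronecker]; exact V.smul_mem _ hC

theorem one_mem_blockSubmodule [DecidableEq ι] [DecidableEq A] (h1 : (1 : Matrix A A ℂ) ∈ V) :
    (1 : Matrix (ι × A) (ι × A) ℂ) ∈ blockSubmodule V ι := by
  rw [← one_kronecker_one]; exact kronecker_mem_blockSubmodule 1 h1

theorem conjTranspose_mem_blockSubmodule (hV : ∀ C ∈ V, Cᴴ ∈ V)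
    {Z : Matrix (ι × A) (ι × A) ℂ} (hZ : Z ∈ blockSubmodule V ι) : Zᴴ ∈ blockSubmodule V ι :=
  fun k l => by rw [blockOf_conjTranspose]; exact hV _ (hZ l k)

def blockwise (Γ : V →ₗ[ℂ] Matrix B B ℂ) :
    blockSubmodule V ι →ₗ[ℂ] Matrix (ι × B) (ι × B) ℂ where
  toFun Z := Matrix.of fun p q => Γ ⟨blockOf Z p.1 q.1, Z.2 p.1 q.1⟩ p.2 q.2
  map_add' Z W := by
    ext p q
    exact congrFun₂ (map_add Γ ⟨_, Z.2 p.1 q.1⟩ ⟨_, W.2 p.1 q.1⟩) p.2 q.2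
  map_smul' c Z := by
    ext p q
    exact congrFun₂ (map_smul Γ c ⟨_, Z.2 p.1 q.1⟩) p.2 q.2

def IsCPOn (Γ : V →ₗ[ℂ] Matrix B B ℂ) : Prop :=
  ∀ (n : ℕ) (M : Matrix (Fin n × A) (Fin n × A) ℂ) (hM : M ∈ blockSubmodule V (Fin n)),
    M.PosSemidef → (blockwise Γ ⟨M, hM⟩).PosSemidef

theorem IsCPOn.posSemidef_blockwise {Γ : V →ₗ[ℂ] Matrix B B ℂ} (hΓ : IsCPOn Γ) [Fintype ι]
    {M : Matrix (ι × A) (ι × A) ℂ} (hM : M ∈ blockSubmodule V ι) (hpsd : M.PosSemidef) :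
    (blockwise Γ ⟨M, hM⟩).PosSemidef := by
  let e := (Fintype.equivFin ι).symm.prodCongr (Equiv.refl A)
  let e' := (Fintype.equivFin ι).symm.prodCongr (Equiv.refl B)
  have hM' : M.submatrix e e ∈ blockSubmodule V (Fin (Fintype.card ι)) := fun k l => hM _ _
  exact (posSemidef_submatrix_equiv e').mp
    (hΓ _ (M.submatrix e e) hM' ((posSemidef_submatrix_equiv e).mpr hpsd))

end Blocks

section ChoiCorrespondence

variable {A B : Type*} [Fintype B] [DecidableEq B] {V : Submodule ℂ (Matrix A A ℂ)}

/-- `φ Z = ⟪Ω, (Γ applied blockwise) Z Ω⟫` for the unnormalized maximally entangled vector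
`Ω = ∑ p, e_p ⊗ e_p`. -/
def choiFunctional (Γ : V →ₗ[ℂ] Matrix B B ℂ) : blockSubmodule V B →ₗ[ℂ] ℂ where
  toFun Z := ∑ p, ∑ q, blockwise Γ Z (p, p) (q, q)
  map_add' Z W := by simp [Finset.sum_add_distrib]
  map_smul' c Z := by simp [Finset.mul_sum]

theorem star_dotProduct_mulVec_maxEntangled (X : Matrix (B × B) (B × B) ℂ) :
    star (fun u : B × B => if u.1 = u.2 then (1 : ℂ) else 0) ⬝ᵥ
      (X *ᵥ fun u => if u.1 = u.2 then 1 else 0) = ∑ p, ∑ q, X (p, p) (q, q) := by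
  simp [dotProduct, mulVec, Fintype.sum_prod_type, Finset.mul_sum]

theorem choiFunctional_nonneg {Γ : V →ₗ[ℂ] Matrix B B ℂ} (hΓ : IsCPOn Γ)
    (Z : blockSubmodule V B) (hZ : (Z : Matrix (B × A) (B × A) ℂ).PosSemidef) :
    0 ≤ choiFunctional Γ Z := by
  have := (hΓ.posSemidef_blockwise Z.2 hZ).dotProduct_mulVec_nonneg
    (fun u => if u.1 = u.2 then 1 else 0)
  rwa [star_dotProduct_mulVec_maxEntangled] at this

def mapOfFunctional (ψ : Matrix (B × A) (B × A) ℂ →ₗ[ℂ] ℂ) :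
    Matrix A A ℂ →ₗ[ℂ] Matrix B B ℂ where
  toFun C := Matrix.of fun p q => ψ (single p q 1 ⊗ₖ C)
  map_add' C D := by ext p q; simp [kronecker_add]
  map_smul' c C := by ext p q; simp [kronecker_smul]

theorem mapOfFunctional_apply_of_mem {Γ : V →ₗ[ℂ] Matrix B B ℂ}
    {ψ : Matrix (B × A) (B × A) ℂ →ₗ[ℂ] ℂ}
    (hψ : ∀ Z : blockSubmodule V B, ψ Z = choiFunctional Γ Z) (C : V) :
    mapOfFunctional ψ C = Γ C := by
  ext p q
  have hZ := kronecker_mem_blockSubmodule (single p q (1 : ℂ)) C.2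
  have hblock : ∀ p' q', (⟨blockOf (single p q 1 ⊗ₖ (C : Matrix A A ℂ)) p' q', hZ p' q'⟩ : V)
      = single p q (1 : ℂ) p' q' • C := fun p' q' => Subtype.ext (blockOf_kronecker _ _ _ _)
  change ψ (single p q 1 ⊗ₖ (C : Matrix A A ℂ)) = _
  rw [hψ ⟨_, hZ⟩]
  simp only [choiFunctional, blockwise, LinearMap.coe_mk, AddHom.coe_mk, of_apply, hblock,
    map_smul, Matrix.smul_apply, smul_eq_mul, single_apply, ite_and, ite_mul, one_mul, zero_mul,
    Finset.sum_ite_irrel, Finset.sum_ite_eq, Finset.mem_univ, ↓reduceIte, Finset.sum_const_zero]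

theorem star_dotProduct_mapBlocks_mapOfFunctional_mulVec [Fintype A] [DecidableEq A]
    {ι : Type*} [Fintype ι] (ψ : Matrix (B × A) (B × A) ℂ →ₗ[ℂ] ℂ)
    (M : Matrix (ι × A) (ι × A) ℂ) (x : ι × B → ℂ) :
    star x ⬝ᵥ (mapBlocks (mapOfFunctional ψ) M *ᵥ x) =
      ψ ((of (Function.curry x) ⊗ₖ (1 : Matrix A A ℂ))ᴴ * M *
        (of (Function.curry x) ⊗ₖ (1 : Matrix A A ℂ))) := by
  have e : (of (Function.curry x) ⊗ₖ (1 : Matrix A A ℂ))ᴴ * M *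
      (of (Function.curry x) ⊗ₖ (1 : Matrix A A ℂ))
      = ∑ u, ∑ v, (star (x u) * x v) • (single u.2 v.2 1 ⊗ₖ blockOf M u.1 v.1) := by
    ext ⟨p, a⟩ ⟨q, b⟩
    simp only [Matrix.mul_apply, conjTranspose_apply, kroneckerMap_apply, of_apply,
      Function.curry_apply, one_apply, mul_ite, mul_one, mul_zero, RCLike.star_def,
      apply_ite (starRingEnd ℂ), map_zero, ite_mul, zero_mul, Fintype.sum_prod_type,
      Finset.sum_ite_eq', Finset.mem_univ, ↓reduceIte, Finset.sum_mul, blockOf, Matrix.sum_apply,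
      Matrix.smul_apply, single_apply, ite_and, one_mul, smul_eq_mul, Finset.sum_ite_irrel,
      Finset.sum_const_zero]
    rw [Finset.sum_comm]
    refine Finset.sum_congr rfl fun k _ => Finset.sum_congr rfl fun l _ => ?_
    ring
  rw [e, map_sum]
  simp only [dotProduct, Pi.star_apply, RCLike.star_def, mulVec, mapBlocks, mapOfFunctional,
    LinearMap.coe_mk, AddHom.coe_mk, of_apply, Finset.mul_sum, blockOf, map_sum, map_smul,
    smul_eq_mul]
  refine Finset.sum_congr rfl fun u _ => Finset.sum_congr rfl fun v _ => ?_
  ring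

theorem isCP_mapOfFunctional [Fintype A] {ψ : Matrix (B × A) (B × A) ℂ →ₗ[ℂ] ℂ}
    (hψ : ∀ Z, Z.PosSemidef → 0 ≤ ψ Z) : IsCP (mapOfFunctional ψ) := fun n M hM => by
  classical
  exact posSemidef_iff_forall_dotProduct_mulVec_nonneg.mpr fun x => by
    rw [star_dotProduct_mapBlocks_mapOfFunctional_mulVec]
    exact hψ _ (hM.conjTranspose_mul_mul_same _)

end ChoiCorrespondence

section OperatorSystem

variable {d r : ℕ}

theorem btr_conjTranspose (C : Matrix (Fin d × Fin r) (Fin d × Fin r) ℂ) (i j : Fin d) :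
    btr Cᴴ i j = star (btr C j i) := by
  simp [btr]

theorem btr_one (i j : Fin d) :
    btr (1 : Matrix (Fin d × Fin r) (Fin d × Fin r) ℂ) i j = if i = j then (r : ℂ) else 0 := by
  by_cases h : i = j <;> simp [btr, one_apply, h]

theorem ptrace_conjTranspose (C : Matrix (Fin d × Fin r) (Fin d × Fin r) ℂ) :
    ptrace Cᴴ = (ptrace C)ᴴ := by
  ext i j; simp [ptrace, btr_conjTranspose]

theorem ptrace_one : ptrace (1 : Matrix (Fin d × Fin r) (Fin d × Fin r) ℂ) = (r : ℂ) • 1 := by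
  ext i j; simp [ptrace, btr_one, one_apply]

def ptraceₗ : Matrix (Fin d × Fin r) (Fin d × Fin r) ℂ →ₗ[ℂ] Matrix (Fin d) (Fin d) ℂ where
  toFun := ptrace
  map_add' C D := by ext i j; exact btr_add C D i j
  map_smul' c C := by ext i j; exact btr_smul c C i j

theorem mem_Ssub_of_ptrace_eq_smul_one {C : Matrix (Fin d × Fin r) (Fin d × Fin r) ℂ} {c : ℂ}
    (hC : ptrace C = c • 1) : C ∈ Ssub d r := by
  have hbtr (i j : Fin d) : btr C i j = if i = j then c else 0 := by
    simpa [ptrace, one_apply] using congrFun₂ hC i j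
  exact ⟨fun i j => by simp [hbtr], fun i j hij => by simp [hbtr, hij]⟩

theorem one_mem_Ssub : (1 : Matrix (Fin d × Fin r) (Fin d × Fin r) ℂ) ∈ Ssub d r :=
  mem_Ssub_of_ptrace_eq_smul_one ptrace_one

theorem conjTranspose_mem_Ssub {C : Matrix (Fin d × Fin r) (Fin d × Fin r) ℂ}
    (hC : C ∈ Ssub d r) : Cᴴ ∈ Ssub d r :=
  ⟨fun i j => by rw [btr_conjTranspose, btr_conjTranspose, hC.1 i j],
    fun i j hij => by rw [btr_conjTranspose, hC.2 j i (Ne.symm hij), star_zero]⟩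

/-- `1 / r`, the Choi matrix of the completely depolarizing channel. -/
def depolarizingChoi (d r : ℕ) : Ssub d r :=
  ⟨((r⁻¹ : ℝ) : ℂ) • 1, (Ssub d r).smul_mem _ one_mem_Ssub⟩

theorem posSemidef_depolarizingChoi :
    (depolarizingChoi d r : Matrix (Fin d × Fin r) (Fin d × Fin r) ℂ).PosSemidef :=
  PosSemidef.one.smul (by positivity)

theorem ptrace_depolarizingChoi (hr : 0 < r) :
    ptraceₗ (depolarizingChoi d r : Matrix (Fin d × Fin r) (Fin d × Fin r) ℂ) = 1 := by
  change ptraceₗ (((r⁻¹ : ℝ) : ℂ) • 1) = 1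
  rw [map_smul]
  change ((r⁻¹ : ℝ) : ℂ) • ptrace 1 = 1
  rw [ptrace_one, smul_smul, Complex.ofReal_inv, Complex.ofReal_natCast,
    inv_mul_cancel₀ (by exact_mod_cast hr.ne'), one_smul]

end OperatorSystem

section TracePreserving

variable {d r : ℕ} {W : Type*} [AddCommGroup W] [Module ℂ W] (L : Ssub d r →ₗ[ℂ] W) {w : W}

/-- `depolarizingChoi + ε • H` is again the Choi matrix of a channel for small `ε > 0`. -/
theorem map_eq_zero_of_isHermitian_of_ptrace_eq_zero (hr : 0 < r)
    (hL : ∀ C : Ssub d r, (C : Matrix (Fin d × Fin r) (Fin d × Fin r) ℂ).PosSemidef →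
      ptrace (C : Matrix (Fin d × Fin r) (Fin d × Fin r) ℂ) = 1 → L C = w)
    (H : Ssub d r) (hH : (H : Matrix (Fin d × Fin r) (Fin d × Fin r) ℂ).IsHermitian)
    (h0 : ptraceₗ (H : Matrix (Fin d × Fin r) (Fin d × Fin r) ℂ) = 0) : L H = 0 := by
  obtain ⟨t, ht, hpsd⟩ := hH.exists_posSemidef_smul_one_add
  let ε : ℝ := (r * t)⁻¹
  have hε : 0 < ε := by positivity
  have hCε : ((depolarizingChoi d r + (ε : ℂ) • H : Ssub d r) :
      Matrix (Fin d × Fin r) (Fin d × Fin r) ℂ) = (ε : ℂ) • ((t : ℂ) • 1 + H) := by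
    change ((r⁻¹ : ℝ) : ℂ) • 1 + (ε : ℂ) • (H : Matrix (Fin d × Fin r) (Fin d × Fin r) ℂ) = _
    have hεt : (r * t : ℝ)⁻¹ * t = (r : ℝ)⁻¹ := by
      rw [mul_inv, mul_assoc, inv_mul_cancel₀ ht.ne', mul_one]
    rw [smul_add, smul_smul, ← Complex.ofReal_mul, hεt]
  have hCεpsd := hpsd.smul (Complex.zero_le_real.mpr hε.le)
  rw [← hCε] at hCεpsd
  have hLε := hL _ hCεpsd <| by
    change ptraceₗ ((depolarizingChoi d r : Matrix (Fin d × Fin r) (Fin d × Fin r) ℂ) +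
      (ε : ℂ) • (H : Matrix (Fin d × Fin r) (Fin d × Fin r) ℂ)) = 1
    rw [map_add, ptrace_depolarizingChoi hr, map_smul, h0, smul_zero, add_zero]
  rw [map_add, map_smul, hL _ posSemidef_depolarizingChoi (ptrace_depolarizingChoi hr),
    add_eq_left, smul_eq_zero] at hLε
  exact hLε.resolve_left (by exact_mod_cast hε.ne')

/-- `depolarizingChoi` is an interior point of the positive semidefinite matrices within the affine
subspace `ptrace C = 1` of `S(d,r)`, so a linear map constant on those is constant on all of it. -/
theorem eq_of_forall_posSemidef_ptrace_eq_one (hr : 0 < r)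
    (hL : ∀ C : Ssub d r, (C : Matrix (Fin d × Fin r) (Fin d × Fin r) ℂ).PosSemidef →
      ptrace (C : Matrix (Fin d × Fin r) (Fin d × Fin r) ℂ) = 1 → L C = w)
    (C : Ssub d r) (hC : ptrace (C : Matrix (Fin d × Fin r) (Fin d × Fin r) ℂ) = 1) : L C = w := by
  let K := Ssub d r ⊓ LinearMap.ker ptraceₗ
  have hK : ∀ D ∈ K, Dᴴ ∈ K := fun D ⟨hS, hD⟩ =>
    ⟨conjTranspose_mem_Ssub hS, by
      change ptrace Dᴴ = 0
      rw [ptrace_conjTranspose, show ptrace D = 0 from hD, conjTranspose_zero]⟩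
  have hLK : ∀ D : K, L (Submodule.inclusion inf_le_left D) = 0 := by
    intro D
    have hLH (H : K) (hH : IsSelfAdjoint (H : Matrix (Fin d × Fin r) (Fin d × Fin r) ℂ)) :
        L (Submodule.inclusion inf_le_left H) = 0 :=
      map_eq_zero_of_isHermitian_of_ptrace_eq_zero L hr hL _ hH H.2.2
    obtain ⟨h, k, hh, hk, rfl⟩ := K.exists_isSelfAdjoint_add_I_smul hK D
    rw [map_add, map_smul, map_add, map_smul, hLH h hh, hLH k hk, smul_zero, add_zero]
  have hD : (C : Matrix (Fin d × Fin r) (Fin d × Fin r) ℂ) - depolarizingChoi d r ∈ K :=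
    ⟨(Ssub d r).sub_mem C.2 (depolarizingChoi d r).2, LinearMap.mem_ker.mpr <| by
      rw [map_sub, ptrace_depolarizingChoi hr, sub_eq_zero]
      exact hC⟩
  calc L C = L (depolarizingChoi d r) + L (C - depolarizingChoi d r) := by
        rw [← map_add, add_sub_cancel]
    _ = w := by
      rw [hL _ posSemidef_depolarizingChoi (ptrace_depolarizingChoi hr),
        show L (C - depolarizingChoi d r) = 0 from hLK ⟨_, hD⟩, add_zero]

end TracePreserving

theorem QSC_extends_to_superchannel_general (d₁ r₁ d₂ r₂ : ℕ)
    (hr₁ : 0 < r₁)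
    (Γ : ↥(Ssub d₁ r₁) →ₗ[ℂ] Matrix (Fin d₂ × Fin r₂) (Fin d₂ × Fin r₂) ℂ)
    (hCP : ∀ (n : ℕ) (M : Matrix (Fin n × (Fin d₁ × Fin r₁)) (Fin n × (Fin d₁ × Fin r₁)) ℂ)
        (hM : ∀ k l : Fin n,
          (Matrix.of fun a b : Fin d₁ × Fin r₁ => M (k, a) (l, b)) ∈ Ssub d₁ r₁),
      M.PosSemidef →
      (Matrix.of fun p q : Fin n × (Fin d₂ × Fin r₂) =>
        Γ ⟨Matrix.of fun a b : Fin d₁ × Fin r₁ => M (p.1, a) (q.1, b),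
          hM p.1 q.1⟩ p.2 q.2).PosSemidef)
    (hTP : ∀ C : ↥(Ssub d₁ r₁),
      (C : Matrix (Fin d₁ × Fin r₁) (Fin d₁ × Fin r₁) ℂ).PosSemidef →
      ptrace (C : Matrix (Fin d₁ × Fin r₁) (Fin d₁ × Fin r₁) ℂ) = 1 →
      (Γ C).PosSemidef ∧ ptrace (Γ C) = 1) :
    ∃ S : Matrix (Fin d₁ × Fin r₁) (Fin d₁ × Fin r₁) ℂ →ₗ[ℂ]
        Matrix (Fin d₂ × Fin r₂) (Fin d₂ × Fin r₂) ℂ,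
      IsCP ⇑S ∧
      (∀ C : ↥(Ssub d₁ r₁), S (C : Matrix (Fin d₁ × Fin r₁) (Fin d₁ × Fin r₁) ℂ) = Γ C) ∧
      ∀ C : Matrix (Fin d₁ × Fin r₁) (Fin d₁ × Fin r₁) ℂ,
        ptrace C = 1 → ptrace (S C) = 1 := by
  obtain ⟨ψ, hψΓ, hψ⟩ := krein_extension (choiFunctional Γ)
    (one_mem_blockSubmodule one_mem_Ssub)
    (fun _ => conjTranspose_mem_blockSubmodule fun _ => conjTranspose_mem_Ssub)
    (choiFunctional_nonneg (hCP : IsCPOn Γ))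
  have hS := mapOfFunctional_apply_of_mem hψΓ
  refine ⟨mapOfFunctional ψ, isCP_mapOfFunctional hψ, hS, fun C hC => ?_⟩
  rw [hS ⟨C, mem_Ssub_of_ptrace_eq_smul_one (hC.trans (one_smul ℂ 1).symm)⟩]
  exact eq_of_forall_posSemidef_ptrace_eq_one (ptraceₗ ∘ₗ Γ) hr₁
    (fun C h₁ h₂ => (hTP C h₁ h₂).2) _ hC

/-- every QSC extends to a quantum superchannel. A completely positive,
CPTP-preserving linear map `Γ̃ : S(d₁,r₁) → M_{d₂}(M_{r₂})` admits a completely positive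
extension `S̃` to all of `M_{d₁}(M_{r₁})` which is moreover TP-preserving. -/
theorem QSC_extends_to_superchannel (d₁ r₁ d₂ r₂ : ℕ)
    (hd₁ : 0 < d₁) (hr₁ : 0 < r₁) (hd₂ : 0 < d₂) (hr₂ : 0 < r₂)
    (Γ : ↥(Ssub d₁ r₁) →ₗ[ℂ] Matrix (Fin d₂ × Fin r₂) (Fin d₂ × Fin r₂) ℂ)
    (hCP : ∀ (n : ℕ) (M : Matrix (Fin n × (Fin d₁ × Fin r₁)) (Fin n × (Fin d₁ × Fin r₁)) ℂ)
        (hM : ∀ k l : Fin n,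
          (Matrix.of fun a b : Fin d₁ × Fin r₁ => M (k, a) (l, b)) ∈ Ssub d₁ r₁),
      M.PosSemidef →
      (Matrix.of fun p q : Fin n × (Fin d₂ × Fin r₂) =>
        Γ ⟨Matrix.of fun a b : Fin d₁ × Fin r₁ => M (p.1, a) (q.1, b),
          hM p.1 q.1⟩ p.2 q.2).PosSemidef)
    (hTP : ∀ C : ↥(Ssub d₁ r₁),
      (C : Matrix (Fin d₁ × Fin r₁) (Fin d₁ × Fin r₁) ℂ).PosSemidef →
      ptrace (C : Matrix (Fin d₁ × Fin r₁) (Fin d₁ × Fin r₁) ℂ) = 1 →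
      (Γ C).PosSemidef ∧ ptrace (Γ C) = 1) :
    ∃ S : Matrix (Fin d₁ × Fin r₁) (Fin d₁ × Fin r₁) ℂ →ₗ[ℂ]
        Matrix (Fin d₂ × Fin r₂) (Fin d₂ × Fin r₂) ℂ,
      IsCP ⇑S ∧
      (∀ C : ↥(Ssub d₁ r₁), S (C : Matrix (Fin d₁ × Fin r₁) (Fin d₁ × Fin r₁) ℂ) = Γ C) ∧
      ∀ C : Matrix (Fin d₁ × Fin r₁) (Fin d₁ × Fin r₁) ℂ,
        ptrace C = 1 → ptrace (S C) = 1 :=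
  QSC_extends_to_superchannel_general d₁ r₁ d₂ r₂ hr₁ Γ hCP hTP

end
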